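/- Let f, g, h be closed convex proper on R^n with h differentiable and L-smooth (L > 0), and α = 1/L. The DYS-gf ergodic iterates satisfy L(x̄^K, u) − L(x, ū^K) ≤ (1/(αK))(‖x^0 − x‖² + α²‖u^0 − u‖²) for all x ∈ dom f, u ∈ dom g*, where L(x,u) = f(x) + h(x) + ⟨u,x⟩ − g*(u). -/

import Mathlib

open Finset RealInnerProductSpace

noncomputable section

/-- A closed convex proper function. -/
def IsCCP {n : ℕ} (D : Set (EuclideanSpace ℝ (Fin n)))
    (f : EuclideanSpace ℝ (Fin n) → ℝ) : Prop :=
  D.Nonempty ∧ ConvexOn ℝ D f ∧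
    IsClosed {p : EuclideanSpace ℝ (Fin n) × ℝ | p.1 ∈ D ∧ f p.1 ≤ p.2}

/-- `p` is the proximal point of `f` (with domain `D`) at `x`. -/
def IsProxOn {n : ℕ} (D : Set (EuclideanSpace ℝ (Fin n)))
    (f : EuclideanSpace ℝ (Fin n) → ℝ) (x p : EuclideanSpace ℝ (Fin n)) : Prop :=
  p ∈ D ∧ ∀ y ∈ D, f p + (1 / 2) * ‖p - x‖ ^ 2 ≤ f y + (1 / 2) * ‖y - x‖ ^ 2

/-- `(Dgs, gs)` is the Fenchel conjugate of `(Dg, g)`. -/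
def IsConjugateOn {n : ℕ} (Dg : Set (EuclideanSpace ℝ (Fin n)))
    (g : EuclideanSpace ℝ (Fin n) → ℝ) (Dgs : Set (EuclideanSpace ℝ (Fin n)))
    (gs : EuclideanSpace ℝ (Fin n) → ℝ) : Prop :=
  ∀ u, (u ∈ Dgs ↔ BddAbove ((fun x => ⟪u, x⟫ - g x) '' Dg)) ∧
    (u ∈ Dgs → IsLUB ((fun x => ⟪u, x⟫ - g x) '' Dg) (gs u))

/-!
Along the iteration, `E_k = ‖x^k - x + α (u^k - u)‖² / (2α)` is a Lyapunov energy: the optimality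
conditions of the two proximal steps, convexity of `h` at the extrapolated point
`z^k = x^k + α (u^k - u^{k+1})` and the descent lemma for `h` (with constant `L = 1/α`) combine
into `𝓛(x^{k+1}, u) - 𝓛(x, u^{k+1}) ≤ E_k - E_{k+1}`, where `𝓛` is the Lagrangian. Summing over
`k < K` telescopes to at most `E_0 ≤ (‖x^0 - x‖² + α² ‖u^0 - u‖²) / α`, and Jensen's inequality
for the convex-concave Lagrangian passes to the averaged iterates.
-/

theorem sum_Icc_le_of_le_sub_succ {a c : ℕ → ℝ} (hac : ∀ k, a (k + 1) ≤ c k - c (k + 1))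
    (hc : ∀ k, 0 ≤ c k) (K : ℕ) : ∑ k ∈ Icc 1 K, a k ≤ c 0 := by
  rw [← Ico_add_one_right_eq_Icc, ← zero_add 1, ← map_add_right_Ico, sum_map, ← range_eq_Ico]
  calc ∑ k ∈ range K, a (k + 1) ≤ ∑ k ∈ range K, (c k - c (k + 1)) := sum_le_sum fun k _ => hac k
    _ = c 0 - c K := sum_range_sub' c K
    _ ≤ c 0 := sub_le_self _ (hc K)

section InnerProductSpace

variable {E : Type*} [NormedAddCommGroup E] [InnerProductSpace ℝ E]

theorem ConvexOn.inner_le_sub_of_prox {D : Set E} {φ : E → ℝ} (hφ : ConvexOn ℝ D φ)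
    {w p v : E} (hp : p ∈ D)
    (hmin : ∀ y ∈ D, φ p + (1 / 2) * ‖p - w‖ ^ 2 ≤ φ y + (1 / 2) * ‖y - w‖ ^ 2)
    (hv : v ∈ D) : ⟪w - p, v - p⟫ ≤ φ v - φ p := by
  -- compare `p` with the points `p + t (v - p)` of the segment and let `t → 0⁺`
  have hbound : ∀ t ∈ Set.Ioc (0 : ℝ) 1,
      ⟪w - p, v - p⟫ - t / 2 * ‖v - p‖ ^ 2 ≤ φ v - φ p := by
    rintro t ⟨ht0, ht1⟩
    have hseg : p + t • (v - p) = (1 - t) • p + t • v := by module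
    have hmem : p + t • (v - p) ∈ D := hseg ▸ hφ.1 hp hv (by linarith) ht0.le (by ring)
    have hconv : φ (p + t • (v - p)) ≤ (1 - t) * φ p + t * φ v :=
      hseg ▸ hφ.2 hp hv (by linarith) ht0.le (by ring)
    have hsq : ‖p + t • (v - p) - w‖ ^ 2
        = ‖p - w‖ ^ 2 - 2 * t * ⟪w - p, v - p⟫ + t ^ 2 * ‖v - p‖ ^ 2 := by
      rw [show p + t • (v - p) - w = (p - w) + t • (v - p) by module, norm_add_sq_real,
        inner_smul_right, norm_smul, Real.norm_of_nonneg ht0.le, ← neg_sub w p, inner_neg_left]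
      ring
    have hcmp := hmin _ hmem
    rw [hsq] at hcmp
    have key : t * (⟪w - p, v - p⟫ - t / 2 * ‖v - p‖ ^ 2) ≤ t * (φ v - φ p) := by nlinarith
    exact le_of_mul_le_mul_left key ht0
  have hlim : Filter.Tendsto (fun t : ℝ => ⟪w - p, v - p⟫ - t / 2 * ‖v - p‖ ^ 2)
      (nhdsWithin 0 (Set.Ioi 0)) (nhds ⟪w - p, v - p⟫) := by
    have hcont : Continuous (fun t : ℝ => ⟪w - p, v - p⟫ - t / 2 * ‖v - p‖ ^ 2) := by fun_prop
    simpa using hcont.continuousWithinAt (s := Set.Ioi 0) (x := 0) |>.tendsto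
  exact le_of_tendsto hlim (Filter.mem_of_superset (Ioc_mem_nhdsGT zero_lt_one) hbound)

theorem ConvexOn.map_inv_card_smul_sum_le {ι : Type*} {s : Finset ι} (hs : s.Nonempty)
    {D : Set E} {φ : E → ℝ} (hφ : ConvexOn ℝ D φ) {x : ι → E} (hx : ∀ i ∈ s, x i ∈ D) :
    φ ((#s : ℝ)⁻¹ • ∑ i ∈ s, x i) ≤ (#s : ℝ)⁻¹ * ∑ i ∈ s, φ (x i) := by
  have hcard : (#s : ℝ) ≠ 0 := by exact_mod_cast hs.card_ne_zero
  rw [smul_sum, mul_sum]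
  refine hφ.map_sum_le (fun _ _ => by positivity) ?_ hx
  rw [sum_const, nsmul_eq_mul, mul_inv_cancel₀ hcard]

def lagrangian (f h gs : E → ℝ) (x u : E) : ℝ := f x + h x + ⟪u, x⟫ - gs u

theorem lagrangian_average_sub_le {ι : Type*} {s : Finset ι} (hs : s.Nonempty)
    {Df Dgs : Set E} {f h gs : E → ℝ} (hf : ConvexOn ℝ Df f) (hh : ConvexOn ℝ Set.univ h)
    (hgs : ConvexOn ℝ Dgs gs) {x u : ι → E} (hx : ∀ i ∈ s, x i ∈ Df)
    (hu : ∀ i ∈ s, u i ∈ Dgs) (X U : E) :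
    lagrangian f h gs ((#s : ℝ)⁻¹ • ∑ i ∈ s, x i) U -
        lagrangian f h gs X ((#s : ℝ)⁻¹ • ∑ i ∈ s, u i) ≤
      (#s : ℝ)⁻¹ * ∑ i ∈ s, (lagrangian f h gs (x i) U - lagrangian f h gs X (u i)) := by
  have hcard : (#s : ℝ)⁻¹ * #s = 1 := inv_mul_cancel₀ (by exact_mod_cast hs.card_ne_zero)
  have hjf := hf.map_inv_card_smul_sum_le hs hx
  have hjh := hh.map_inv_card_smul_sum_le hs (fun i _ => Set.mem_univ (x i))
  have hjgs := hgs.map_inv_card_smul_sum_le hs hu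
  simp only [lagrangian, sum_sub_distrib, sum_add_distrib, sum_const, nsmul_eq_mul,
    inner_smul_left, inner_smul_right, inner_sum, sum_inner, RCLike.conj_to_real] at hjf hjh hjgs ⊢
  linear_combination hjf + hjh + hjgs + (f X + h X + gs U) * hcard

def dysEnergy (α : ℝ) (X U x u : E) : ℝ := (2 * α)⁻¹ * ‖x - X + α • (u - U)‖ ^ 2

theorem two_mul_dysEnergy {α : ℝ} (hα : α ≠ 0) (X U x u : E) :
    2 * α * dysEnergy α X U x u = ‖x - X + α • (u - U)‖ ^ 2 := by
  rw [dysEnergy, ← mul_assoc, mul_inv_cancel₀ (mul_ne_zero two_ne_zero hα), one_mul]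

theorem dysEnergy_nonneg {α : ℝ} (hα : 0 < α) (X U x u : E) : 0 ≤ dysEnergy α X U x u := by
  unfold dysEnergy; positivity

theorem dysEnergy_le {α : ℝ} (hα : 0 < α) (X U x u : E) :
    dysEnergy α X U x u ≤ α⁻¹ * (‖x - X‖ ^ 2 + α ^ 2 * ‖u - U‖ ^ 2) := by
  have hsq : ‖x - X + α • (u - U)‖ ^ 2 ≤ 2 * (‖x - X‖ ^ 2 + α ^ 2 * ‖u - U‖ ^ 2) := by
    calc ‖x - X + α • (u - U)‖ ^ 2 ≤ (‖x - X‖ + ‖α • (u - U)‖) ^ 2 := by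
          gcongr; exact norm_add_le _ _
      _ ≤ 2 * (‖x - X‖ ^ 2 + ‖α • (u - U)‖ ^ 2) := add_sq_le
      _ = 2 * (‖x - X‖ ^ 2 + α ^ 2 * ‖u - U‖ ^ 2) := by
          rw [norm_smul, Real.norm_of_nonneg hα.le, mul_pow]
  calc dysEnergy α X U x u ≤ (2 * α)⁻¹ * (2 * (‖x - X‖ ^ 2 + α ^ 2 * ‖u - U‖ ^ 2)) := by
        unfold dysEnergy; gcongr
    _ = α⁻¹ * (‖x - X‖ ^ 2 + α ^ 2 * ‖u - U‖ ^ 2) := by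
        rw [mul_inv, mul_comm 2⁻¹, mul_assoc, inv_mul_cancel_left₀ two_ne_zero]

/-- In DYS, `u'` and `x'` are the dual and primal prox-points and `G = ∇h (x + α • (u - u'))`. -/
theorem lagrangian_sub_le_dysEnergy_sub {α : ℝ} (hα : 0 < α) {f h gs : E → ℝ}
    {G x u x' u' X U : E}
    (hdual : ⟪x + α • (u - u'), U - u'⟫ ≤ gs U - gs u')
    (hprimal : ⟪x - α • ((2 : ℝ) • u' - u) - α • G - x', X - x'⟫ ≤ α * f X - α * f x')
    (hconvex : h (x + α • (u - u')) + ⟪G, X - (x + α • (u - u'))⟫ ≤ h X)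
    (hdescent : h x' ≤ h (x + α • (u - u')) + ⟪G, x' - (x + α • (u - u'))⟫
      + α⁻¹ / 2 * ‖x' - (x + α • (u - u'))‖ ^ 2) :
    lagrangian f h gs x' U - lagrangian f h gs X u' ≤
      dysEnergy α X U x u - dysEnergy α X U x' u' := by
  set z := x + α • (u - u')
  have h2α : 0 < 2 * α := by positivity
  have hdescent' : 2 * α * h x' ≤ 2 * α * (h z + ⟪G, x' - z⟫) + ‖x' - z‖ ^ 2 := by
    linear_combination mul_le_mul_of_nonneg_left hdescent h2α.le +
      ‖x' - z‖ ^ 2 * mul_inv_cancel₀ hα.ne'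
  have hdual' := mul_le_mul_of_nonneg_left hdual h2α.le
  have hconvex' := mul_le_mul_of_nonneg_left hconvex h2α.le
  rw [← mul_le_mul_iff_right₀ h2α, mul_sub _ (dysEnergy _ _ _ _ _), two_mul_dysEnergy hα.ne',
    two_mul_dysEnergy hα.ne']
  simp only [lagrangian, z, ← real_inner_self_eq_norm_sq, inner_add_left, inner_add_right,
    inner_sub_left, inner_sub_right, real_inner_smul_right, real_inner_comm]
    at hdual' hprimal hconvex' hdescent' ⊢
  linear_combination hdual' + 2 * hprimal + hconvex' + hdescent'

variable [CompleteSpace E] {h : E → ℝ}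

theorem HasGradientAt.hasDerivAt_comp_line {z d G : E} {t : ℝ}
    (hG : HasGradientAt h G (z + t • d)) :
    HasDerivAt (fun s : ℝ => h (z + s • d)) ⟪G, d⟫ t := by
  have hcomp := hG.hasFDerivAt.comp_hasDerivAt t (((hasDerivAt_id t).smul_const d).const_add z)
  simpa [Function.comp_def] using hcomp

theorem ConvexOn.add_inner_le_of_hasGradientAt (hh : ConvexOn ℝ Set.univ h) {z G : E}
    (hG : HasGradientAt h G z) (y : E) : h z + ⟪G, y - z⟫ ≤ h y := by
  have hline : ConvexOn ℝ Set.univ (fun s : ℝ => h (z + s • (y - z))) := by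
    have hcomp := hh.comp_affineMap (AffineMap.lineMap z y : ℝ →ᵃ[ℝ] E)
    simpa [Function.comp_def, AffineMap.lineMap_apply, add_comm] using hcomp
  have hslope := hline.le_slope_of_hasDerivAt (Set.mem_univ 0) (Set.mem_univ 1) zero_lt_one
    (HasGradientAt.hasDerivAt_comp_line (by simpa using hG))
  simp only [slope_def_field, zero_smul, add_zero, one_smul, add_sub_cancel, sub_zero,
    div_one] at hslope
  linarith

theorem le_add_inner_add_sq_of_lipschitz_gradient {gh : E → E} {L : ℝ}
    (hgrad : ∀ w, HasGradientAt h (gh w) w) (hlip : ∀ v w, ‖gh v - gh w‖ ≤ L * ‖v - w‖)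
    (z y : E) : h y ≤ h z + ⟪gh z, y - z⟫ + L / 2 * ‖y - z‖ ^ 2 := by
  -- `h` minus its quadratic model at `z` is antitone on the ray from `z` through `y`
  set φ : ℝ → ℝ := fun t =>
    h (z + t • (y - z)) - t * ⟪gh z, y - z⟫ - L / 2 * t ^ 2 * ‖y - z‖ ^ 2
  have hφ : ∀ t, HasDerivAt φ
      (⟪gh (z + t • (y - z)), y - z⟫ - ⟪gh z, y - z⟫ - L * t * ‖y - z‖ ^ 2) t := by
    intro t
    have hsum := (((hgrad (z + t • (y - z))).hasDerivAt_comp_line).sub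
      ((hasDerivAt_id t).mul_const ⟪gh z, y - z⟫)).sub
      (((hasDerivAt_pow 2 t).const_mul (L / 2)).mul_const (‖y - z‖ ^ 2))
    exact hsum.congr_deriv (by push_cast; ring)
  have hderiv_nonpos : ∀ t ∈ interior (Set.Ici (0 : ℝ)),
      ⟪gh (z + t • (y - z)), y - z⟫ - ⟪gh z, y - z⟫ - L * t * ‖y - z‖ ^ 2 ≤ 0 := by
    intro t ht
    rw [interior_Ici, Set.mem_Ioi] at ht
    have hstep : ‖z + t • (y - z) - z‖ = t * ‖y - z‖ := by
      rw [add_sub_cancel_left, norm_smul, Real.norm_of_nonneg ht.le]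
    refine sub_nonpos.2 ?_
    calc ⟪gh (z + t • (y - z)), y - z⟫ - ⟪gh z, y - z⟫
        = ⟪gh (z + t • (y - z)) - gh z, y - z⟫ := (inner_sub_left _ _ _).symm
      _ ≤ ‖gh (z + t • (y - z)) - gh z‖ * ‖y - z‖ := real_inner_le_norm _ _
      _ ≤ L * (t * ‖y - z‖) * ‖y - z‖ := by
        gcongr; exact hstep ▸ hlip _ _
      _ = L * t * ‖y - z‖ ^ 2 := by ring
  have hanti : AntitoneOn φ (Set.Ici 0) :=
    antitoneOn_of_hasDerivWithinAt_nonpos (convex_Ici 0)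
      (fun t _ => (hφ t).continuousAt.continuousWithinAt)
      (fun t _ => (hφ t).hasDerivWithinAt) hderiv_nonpos
  have hφ01 := hanti Set.self_mem_Ici (Set.mem_Ici.2 zero_le_one) zero_le_one
  simp only [φ, zero_smul, add_zero, zero_mul, sub_zero, one_smul, add_sub_cancel, one_mul,
    ne_eq, OfNat.ofNat_ne_zero, not_false_eq_true, zero_pow, mul_zero, one_pow] at hφ01
  linarith

end InnerProductSpace

section EuclideanSpace

variable {n : ℕ}

theorem IsConjugateOn.convexOn {Dg Dgs : Set (EuclideanSpace ℝ (Fin n))}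
    {g gs : EuclideanSpace ℝ (Fin n) → ℝ} (hconj : IsConjugateOn Dg g Dgs gs) :
    ConvexOn ℝ Dgs gs := by
  have hbound : ∀ ⦃u₁⦄, u₁ ∈ Dgs → ∀ ⦃u₂⦄, u₂ ∈ Dgs → ∀ ⦃a b : ℝ⦄, 0 ≤ a → 0 ≤ b →
      a + b = 1 →
      a * gs u₁ + b * gs u₂ ∈ upperBounds ((fun y => ⟪a • u₁ + b • u₂, y⟫ - g y) '' Dg) := by
    rintro u₁ h₁ u₂ h₂ a b ha hb hab _ ⟨y, hy, rfl⟩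
    have e₁ := mul_le_mul_of_nonneg_left (((hconj u₁).2 h₁).1 ⟨y, hy, rfl⟩) ha
    have e₂ := mul_le_mul_of_nonneg_left (((hconj u₂).2 h₂).1 ⟨y, hy, rfl⟩) hb
    simp only [inner_add_left, real_inner_smul_left] at e₁ e₂ ⊢
    linear_combination e₁ + e₂ + g y * hab
  have hmem : Convex ℝ Dgs := fun u₁ h₁ u₂ h₂ a b ha hb hab =>
    (hconj _).1.2 ⟨_, hbound h₁ h₂ ha hb hab⟩
  exact ⟨hmem, fun u₁ h₁ u₂ h₂ a b ha hb hab =>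
    ((hconj _).2 (hmem h₁ h₂ ha hb hab)).2 (hbound h₁ h₂ ha hb hab)⟩

variable {α : ℝ} {Df Dgs : Set (EuclideanSpace ℝ (Fin n))}
  {f gs h : EuclideanSpace ℝ (Fin n) → ℝ}
  {gh : EuclideanSpace ℝ (Fin n) → EuclideanSpace ℝ (Fin n)}
  {x u : ℕ → EuclideanSpace ℝ (Fin n)}

theorem dys_lagrangian_sub_le_dysEnergy_sub (hα : 0 < α) (hf : ConvexOn ℝ Df f)
    (hgs : ConvexOn ℝ Dgs gs) (hh : ConvexOn ℝ Set.univ h)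
    (hgrad : ∀ z, HasGradientAt h (gh z) z) (hlip : ∀ z w, ‖gh z - gh w‖ ≤ α⁻¹ * ‖z - w‖)
    (hu : ∀ k, IsProxOn Dgs (fun v => α⁻¹ * gs v) (u k + α⁻¹ • x k) (u (k + 1)))
    (hx : ∀ k, IsProxOn Df (fun v => α * f v)
      (x k - α • ((2 : ℝ) • u (k + 1) - u k) -
        α • gh (x k + α • (u k - u (k + 1)))) (x (k + 1)))
    {X U : EuclideanSpace ℝ (Fin n)} (hX : X ∈ Df) (hU : U ∈ Dgs) (k : ℕ) :
    lagrangian f h gs (x (k + 1)) U - lagrangian f h gs X (u (k + 1)) ≤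
      dysEnergy α X U (x k) (u k) - dysEnergy α X U (x (k + 1)) (u (k + 1)) := by
  have hαinv : α * α⁻¹ = 1 := mul_inv_cancel₀ hα.ne'
  have hdual : ⟪x k + α • (u k - u (k + 1)), U - u (k + 1)⟫ ≤ gs U - gs (u (k + 1)) := by
    have hprox := (hgs.smul (inv_nonneg.2 hα.le)).inner_le_sub_of_prox (hu k).1 (hu k).2 hU
    have hz : x k + α • (u k - u (k + 1)) = α • (u k + α⁻¹ • x k - u (k + 1)) := by
      simp only [smul_sub, smul_add, smul_smul, hαinv, one_smul]; abel
    rw [hz, real_inner_smul_left]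
    linear_combination mul_le_mul_of_nonneg_left hprox hα.le +
      (gs U - gs (u (k + 1))) * hαinv
  exact lagrangian_sub_le_dysEnergy_sub hα hdual
    ((hf.smul hα.le).inner_le_sub_of_prox (hx k).1 (hx k).2 hX)
    (hh.add_inner_le_of_hasGradientAt (hgrad _) X)
    (le_add_inner_add_sq_of_lipschitz_gradient hgrad hlip _ _)

end EuclideanSpace

theorem dys_gf_ergodic_rate_general (n K : ℕ) (hK : 1 ≤ K) (L α : ℝ) (hL : 0 < L)
    (hα : α = 1 / L)
    (Df Dg Dgs : Set (EuclideanSpace ℝ (Fin n)))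
    (f g gs h : EuclideanSpace ℝ (Fin n) → ℝ)
    (gh : EuclideanSpace ℝ (Fin n) → EuclideanSpace ℝ (Fin n))
    (hf : IsCCP Df f) (hconj : IsConjugateOn Dg g Dgs gs)
    (hh : ConvexOn ℝ Set.univ h) (hgrad : ∀ z, HasGradientAt h (gh z) z)
    (hlip : ∀ z w, ‖gh z - gh w‖ ≤ L * ‖z - w‖)
    (x u : ℕ → EuclideanSpace ℝ (Fin n))
    (hu : ∀ k, IsProxOn Dgs (fun v => α⁻¹ * gs v) (u k + α⁻¹ • x k) (u (k + 1)))
    (hx : ∀ k, IsProxOn Df (fun v => α * f v)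
      (x k - α • ((2 : ℝ) • u (k + 1) - u k) -
        α • gh (x k + α • (u k - u (k + 1)))) (x (k + 1))) :
    ∀ xx ∈ Df, ∀ uu ∈ Dgs,
      (f ((K : ℝ)⁻¹ • ∑ k ∈ Icc 1 K, x k) + h ((K : ℝ)⁻¹ • ∑ k ∈ Icc 1 K, x k) +
          ⟪uu, (K : ℝ)⁻¹ • ∑ k ∈ Icc 1 K, x k⟫ - gs uu) -
        (f xx + h xx + ⟪(K : ℝ)⁻¹ • ∑ k ∈ Icc 1 K, u k, xx⟫ -
          gs ((K : ℝ)⁻¹ • ∑ k ∈ Icc 1 K, u k)) ≤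
      (1 / (α * (K : ℝ))) * (‖x 0 - xx‖ ^ 2 + α ^ 2 * ‖u 0 - uu‖ ^ 2) := by
  intro X hX U hU
  have hα0 : 0 < α := hα ▸ one_div_pos.2 hL
  have hlip' : ∀ z w, ‖gh z - gh w‖ ≤ α⁻¹ * ‖z - w‖ := by simpa [hα] using hlip
  have hgs := hconj.convexOn
  have hsum := sum_Icc_le_of_le_sub_succ
    (a := fun k => lagrangian f h gs (x k) U - lagrangian f h gs X (u k))
    (dys_lagrangian_sub_le_dysEnergy_sub hα0 hf.2.1 hgs hh hgrad hlip' hu hx hX hU)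
    (fun k => dysEnergy_nonneg hα0 X U (x k) (u k)) K
  have hmem : ∀ k ∈ Icc 1 K, x k ∈ Df ∧ u k ∈ Dgs := fun k hk => by
    obtain ⟨j, rfl⟩ :=
      Nat.exists_eq_add_one_of_ne_zero (Nat.one_le_iff_ne_zero.1 (mem_Icc.1 hk).1)
    exact ⟨(hx j).1, (hu j).1⟩
  have havg := lagrangian_average_sub_le (nonempty_Icc.2 hK) hf.2.1 hh hgs
    (fun k hk => (hmem k hk).1) (fun k hk => (hmem k hk).2) X U
  rw [Nat.card_Icc, Nat.add_sub_cancel] at havg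
  calc _ ≤ (K : ℝ)⁻¹ * dysEnergy α X U (x 0) (u 0) :=
        havg.trans (mul_le_mul_of_nonneg_left hsum (by positivity))
    _ ≤ (K : ℝ)⁻¹ * (α⁻¹ * (‖x 0 - X‖ ^ 2 + α ^ 2 * ‖u 0 - U‖ ^ 2)) := by
        gcongr; exact dysEnergy_le hα0 X U (x 0) (u 0)
    _ = _ := by rw [one_div, mul_inv, ← mul_assoc, mul_comm α⁻¹]

/-- Ergodic convergence of DYS-gf with step size `α = 1/L`: the primal–dual gap of
the averaged iterates is bounded by `(‖x⁰ − x‖² + α²‖u⁰ − u‖²)/(αK)`. -/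
theorem dys_gf_ergodic_rate (n K : ℕ) (hK : 1 ≤ K) (L α : ℝ) (hL : 0 < L)
    (hα : α = 1 / L)
    (Df Dg Dgs : Set (EuclideanSpace ℝ (Fin n)))
    (f g gs h : EuclideanSpace ℝ (Fin n) → ℝ)
    (gh : EuclideanSpace ℝ (Fin n) → EuclideanSpace ℝ (Fin n))
    (hf : IsCCP Df f) (hg : IsCCP Dg g) (hconj : IsConjugateOn Dg g Dgs gs)
    (hh : ConvexOn ℝ Set.univ h) (hgrad : ∀ z, HasGradientAt h (gh z) z)
    (hlip : ∀ z w, ‖gh z - gh w‖ ≤ L * ‖z - w‖)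
    (x u : ℕ → EuclideanSpace ℝ (Fin n))
    (hu : ∀ k, IsProxOn Dgs (fun v => α⁻¹ * gs v) (u k + α⁻¹ • x k) (u (k + 1)))
    (hx : ∀ k, IsProxOn Df (fun v => α * f v)
      (x k - α • ((2 : ℝ) • u (k + 1) - u k) -
        α • gh (x k + α • (u k - u (k + 1)))) (x (k + 1))) :
    ∀ xx ∈ Df, ∀ uu ∈ Dgs,
      (f ((K : ℝ)⁻¹ • ∑ k ∈ Icc 1 K, x k) + h ((K : ℝ)⁻¹ • ∑ k ∈ Icc 1 K, x k) +
          ⟪uu, (K : ℝ)⁻¹ • ∑ k ∈ Icc 1 K, x k⟫ - gs uu) -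
        (f xx + h xx + ⟪(K : ℝ)⁻¹ • ∑ k ∈ Icc 1 K, u k, xx⟫ -
          gs ((K : ℝ)⁻¹ • ∑ k ∈ Icc 1 K, u k)) ≤
      (1 / (α * (K : ℝ))) * (‖x 0 - xx‖ ^ 2 + α ^ 2 * ‖u 0 - uu‖ ^ 2) :=
  dys_gf_ergodic_rate_general n K hK L α hL hα Df Dg Dgs f g gs h gh hf hconj hh hgrad hlip x u hu
    hx
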